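/- An arbitrary direct sum of co-Kasch right R-modules is again a co-Kasch module. -/

import Mathlib

/-!
A simple submodule `S` of `(⨁ i, M i) ⧸ K` is an atom, hence a compact element, of the submodule
lattice, so it lies in the sum `N₁ ⊔ ⋯ ⊔ Nₙ` of the images of finitely many summands. Peeling off
summands one at a time, `S` is either below the sum of the remaining ones or disjoint from it; so
for some `i` and some `N` disjoint from `S` we get `S ≤ Nᵢ ⊔ N`. Then `S` embeds into the quotient
by `N`, inside the image of `M i`, i.e. `S` is a simple subfactor of `M i`. As `M i` is co-Kasch,
`S` is an image of `M i`, hence of the direct sum via the projection onto `M i`.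
-/

def IsCoKasch (R : Type*) [Ring R] (M : Type*) [AddCommGroup M] [Module R M] : Prop :=
  ∀ (K : Submodule R M) (S : Submodule R (M ⧸ K)), IsSimpleModule R S →
    ∃ f : M →ₗ[R] S, Function.Surjective f

open LinearMap

section Lattice

variable {α : Type*} [CompleteLattice α] {a : α}

theorem IsAtom.isCompactElement [IsCompactlyGenerated α] (ha : IsAtom a) :
    IsCompactElement a := by
  obtain ⟨s, hs, rfl⟩ := IsCompactlyGenerated.exists_sSup_eq a
  obtain ⟨c, hc, hne⟩ : ∃ c ∈ s, c ≠ ⊥ := by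
    by_contra! h
    exact ha.1 (sSup_eq_bot.2 h)
  exact (ha.le_iff.1 (le_sSup hc)).resolve_left hne ▸ hs c hc

theorem IsAtom.exists_disjoint_le_sup_of_le_biSup {ι : Type*} (ha : IsAtom a) (f : ι → α)
    (s : Finset ι) (h : a ≤ ⨆ i ∈ s, f i) : ∃ i ∈ s, ∃ b, Disjoint a b ∧ a ≤ f i ⊔ b := by
  classical
  induction s using Finset.induction_on with
  | empty => exact absurd (le_bot_iff.1 (by simpa using h)) ha.1
  | insert j s _ ih =>
    rw [Finset.iSup_insert] at h
    by_cases hle : a ≤ ⨆ i ∈ s, f i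
    · obtain ⟨i, hi, hb⟩ := ih hle
      exact ⟨i, Finset.mem_insert_of_mem hi, hb⟩
    · exact ⟨j, Finset.mem_insert_self j s, _, ha.not_le_iff_disjoint.1 hle, h⟩

theorem IsAtom.exists_disjoint_le_sup_of_le_iSup [IsCompactlyGenerated α] {ι : Type*}
    (ha : IsAtom a) (f : ι → α) (h : a ≤ ⨆ i, f i) : ∃ i b, Disjoint a b ∧ a ≤ f i ⊔ b := by
  obtain ⟨s, hs⟩ :=
    CompleteLattice.IsCompactElement.exists_finset_of_le_iSup α ha.isCompactElement f h
  obtain ⟨i, -, hi⟩ := ha.exists_disjoint_le_sup_of_le_biSup f s hs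
  exact ⟨i, hi⟩

end Lattice

variable {R : Type*} [Ring R] {Q : Type*} [AddCommGroup Q] [Module R Q]

theorem IsCoKasch.exists_surjective_of_range_le {M S : Type*} [AddCommGroup M] [Module R M]
    [AddCommGroup S] [Module R S] [IsSimpleModule R S] (hM : IsCoKasch R M) (φ : M →ₗ[R] Q)
    (g : S →ₗ[R] Q) (hg : Function.Injective g) (hle : range g ≤ range φ) :
    ∃ f : M →ₗ[R] S, Function.Surjective f := by
  let g' : S →ₗ[R] M ⧸ ker φ :=
    φ.quotKerEquivRange.symm.toLinearMap ∘ₗ g.codRestrict (range φ) fun s => hle ⟨s, rfl⟩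
  have hg' : Function.Injective g' :=
    φ.quotKerEquivRange.symm.injective.comp fun _ _ h => hg (congrArg Subtype.val h)
  let e := LinearEquiv.ofInjective g' hg'
  have : IsSimpleModule R (range g') := IsSimpleModule.congr e.symm
  obtain ⟨f, hf⟩ := hM (ker φ) (range g') this
  exact ⟨e.symm.toLinearMap ∘ₗ f, e.symm.surjective.comp hf⟩

theorem exists_surjective_of_le_iSup_range {ι : Type*} {M : ι → Type*}
    [∀ i, AddCommGroup (M i)] [∀ i, Module R (M i)] (hM : ∀ i, IsCoKasch R (M i))
    (φ : ∀ i, M i →ₗ[R] Q) (S : Submodule R Q) [IsSimpleModule R S]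
    (hS : S ≤ ⨆ i, range (φ i)) : ∃ i, ∃ f : M i →ₗ[R] S, Function.Surjective f := by
  obtain ⟨i, N, hdisj, hle⟩ :=
    (isSimpleModule_iff_isAtom.1 ‹_›).exists_disjoint_le_sup_of_le_iSup _ hS
  refine ⟨i, (hM i).exists_surjective_of_range_le (N.mkQ ∘ₗ φ i) (N.mkQ ∘ₗ S.subtype) ?_ ?_⟩
  · rw [← ker_eq_bot, ker_comp, Submodule.ker_mkQ, ← Submodule.disjoint_iff_comap_eq_bot]
    exact hdisj
  · rw [range_comp, range_comp, Submodule.range_subtype]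
    calc S.map N.mkQ ≤ (range (φ i) ⊔ N).map N.mkQ := Submodule.map_mono hle
      _ = (range (φ i)).map N.mkQ := by rw [Submodule.map_sup, Submodule.mkQ_map_self, sup_bot_eq]

open DirectSum in
theorem stmt5 (R : Type u) [Ring R] {ι : Type u} (M : ι → Type u)
    [∀ i, AddCommGroup (M i)] [∀ i, Module R (M i)]
    (h : ∀ i, IsCoKasch R (M i)) : IsCoKasch R (⨁ i, M i) := by
  classical
  intro K S hS
  have hgen : ⨆ i, range (K.mkQ ∘ₗ lof R ι M i) = ⊤ := by
    simp_rw [range_comp, ← Submodule.map_iSup]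
    -- `lof R ι M i` is `DFinsupp.lsingle i` by definition
    rw [show ⨆ i, range (lof R ι M i) = ⊤ from DFinsupp.iSup_range_lsingle, Submodule.map_top,
      Submodule.range_mkQ]
  obtain ⟨i, f, hf⟩ := exists_surjective_of_le_iSup_range h _ S (hgen ▸ le_top)
  exact ⟨f ∘ₗ component R ι M i, hf.comp fun m => ⟨lof R ι M i m, by simp⟩⟩
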